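/- Suppose sin θ0 · cos θ1 = 0 and cos θ0 ≠ sin θ0 · sin θ1. Then for every t ∈ ℕ the first moment satisfies: E₁(t) = 0 if t is even, and E₁(t) = (2p − 1)·(2·c0² − 1) if t is odd, where c0 = cos θ0. -/

import Mathlib

open Matrix Complex Filter

/-- Local operation `P(θ0,θ1)`. -/
noncomputable def Pmat (θ0 θ1 : ℝ) : Matrix (Fin 2) (Fin 2) ℂ :=
  !![0, (Real.cos θ0 : ℂ);
     ((Real.sin θ0 * Real.sin θ1 : ℝ) : ℂ), (-((Real.sin θ0 * Real.cos θ1 : ℝ) : ℂ))]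

/-- Local operation `Q(θ0,θ1)`. -/
noncomputable def Qmat (θ0 θ1 : ℝ) : Matrix (Fin 2) (Fin 2) ℂ :=
  !![((Real.sin θ0 * Real.cos θ1 : ℝ) : ℂ), ((Real.sin θ0 * Real.sin θ1 : ℝ) : ℂ);
     (Real.cos θ0 : ℂ), 0]

/-- The open quantum walk on ℤ with initial state `diagonal (p, 1-p)` at the origin. -/
noncomputable def owalk (θ0 θ1 p : ℝ) : ℕ → ℤ → Matrix (Fin 2) (Fin 2) ℂ
  | 0, x => if x = 0 then Matrix.diagonal ![(p : ℂ), ((1 - p : ℝ) : ℂ)] else 0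
  | t + 1, x =>
      Pmat θ0 θ1 * owalk θ0 θ1 p t (x + 1) * (Pmat θ0 θ1)ᴴ
        + Qmat θ0 θ1 * owalk θ0 θ1 p t (x - 1) * (Qmat θ0 θ1)ᴴ

/-- Finding probability at position `x` at time `t`. -/
noncomputable def findprob (θ0 θ1 p : ℝ) (t : ℕ) (x : ℤ) : ℝ :=
  ((owalk θ0 θ1 p t x).trace).re

/-- First moment (finite sum: the walk vanishes outside `[-t, t]`). -/
noncomputable def moment1 (θ0 θ1 p : ℝ) (t : ℕ) : ℝ :=
  ∑ x ∈ Finset.Icc (-(t : ℤ)) (t : ℤ), (x : ℝ) * findprob θ0 θ1 p t x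

/-- Second moment. -/
noncomputable def moment2 (θ0 θ1 p : ℝ) (t : ℕ) : ℝ :=
  ∑ x ∈ Finset.Icc (-(t : ℤ)) (t : ℤ), (x : ℝ) ^ 2 * findprob θ0 θ1 p t x

/-- Standard deviation. -/
noncomputable def stdDev (θ0 θ1 p : ℝ) (t : ℕ) : ℝ :=
  Real.sqrt (moment2 θ0 θ1 p t - (moment1 θ0 θ1 p t) ^ 2)

/-!
If `sin θ0 cos θ1 = 0`, both `P` and `Q` are anti-diagonal, so the diagonal of `ρ t x` evolves as
a classical walk whose two chiralities swap at every step, with jump weights `cos² θ0` and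
`(sin θ0 sin θ1)² = 1 - cos² θ0`. Hence the two chirality masses swap at every step, their
difference is `(-1)ᵗ (2p - 1)`, and each step changes the first moment by `2 cos² θ0 - 1` times
this difference; summing, `E₁(t) = (2p - 1)(2 cos² θ0 - 1)(1 - (-1)ᵗ) / 2`.
-/

open Finset

theorem Finset.sum_Icc_succ_comp_add {M : Type*} [AddCommMonoid M] {f : ℤ → M} {n c : ℤ}
    (hc : |c| ≤ 1) (hf : ∀ y ∉ Icc (-n) n, f y = 0) :
    ∑ x ∈ Icc (-(n + 1)) (n + 1), f (x + c) = ∑ y ∈ Icc (-n) n, f y := by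
  have hshift : ∑ x ∈ Icc (-(n + 1)) (n + 1), f (x + c)
      = ∑ y ∈ Icc (-(n + 1) + c) (n + 1 + c), f y := by
    rw [← map_add_right_Icc, sum_map]
    rfl
  rw [hshift]
  refine (sum_subset (fun y hy => ?_) fun y _ hy => hf y hy).symm
  rw [mem_Icc] at hy ⊢
  rw [abs_le] at hc
  omega

theorem Finset.sum_Icc_succ_shift {M : Type*} [AddCommMonoid M] {G H : ℤ → M} {n : ℤ}
    (hG : ∀ y ∉ Icc (-n) n, G y = 0) (hH : ∀ y ∉ Icc (-n) n, H y = 0) :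
    ∑ x ∈ Icc (-(n + 1)) (n + 1), (G (x + 1) + H (x - 1)) = ∑ y ∈ Icc (-n) n, (G y + H y) := by
  simp only [sub_eq_add_neg, sum_add_distrib]
  rw [sum_Icc_succ_comp_add (by norm_num) hG, sum_Icc_succ_comp_add (by norm_num) hH]

theorem Finset.sum_Icc_succ_mul_shift {R : Type*} [CommSemiring R] {f : ℤ → R} {n : ℤ} {a b : R}
    (hf : ∀ y ∉ Icc (-n) n, f y = 0) :
    ∑ x ∈ Icc (-(n + 1)) (n + 1), (a * f (x + 1) + b * f (x - 1))
      = (a + b) * ∑ y ∈ Icc (-n) n, f y := by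
  refine (sum_Icc_succ_shift (G := fun y => a * f y) (H := fun y => b * f y)
    (fun y hy => by rw [hf y hy, mul_zero]) (fun y hy => by rw [hf y hy, mul_zero])).trans ?_
  rw [add_mul, mul_sum, mul_sum, sum_add_distrib]

theorem Matrix.antidiag_mul_mul_conjTranspose_apply_zero_zero (x y : ℝ)
    (ρ : Matrix (Fin 2) (Fin 2) ℂ) :
    (!![0, (x : ℂ); (y : ℂ), 0] * ρ * (!![0, (x : ℂ); (y : ℂ), 0])ᴴ) 0 0
      = ((x ^ 2 : ℝ) : ℂ) * ρ 1 1 := by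
  simp only [mul_apply, Fin.sum_univ_two, conjTranspose_apply, of_apply, cons_val', cons_val_zero,
    cons_val_one, cons_val_fin_one, RCLike.star_def, conj_ofReal, map_zero]
  push_cast
  ring

theorem Matrix.antidiag_mul_mul_conjTranspose_apply_one_one (x y : ℝ)
    (ρ : Matrix (Fin 2) (Fin 2) ℂ) :
    (!![0, (x : ℂ); (y : ℂ), 0] * ρ * (!![0, (x : ℂ); (y : ℂ), 0])ᴴ) 1 1
      = ((y ^ 2 : ℝ) : ℂ) * ρ 0 0 := by
  simp only [mul_apply, Fin.sum_univ_two, conjTranspose_apply, of_apply, cons_val', cons_val_zero,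
    cons_val_one, cons_val_fin_one, RCLike.star_def, conj_ofReal, map_zero]
  push_cast
  ring

section OpenWalk

variable {θ0 θ1 p : ℝ}

theorem owalk_eq_zero_of_notMem_Icc :
    ∀ {t : ℕ} {x : ℤ}, x ∉ Icc (-(t : ℤ)) t → owalk θ0 θ1 p t x = 0
  | 0, x, hx => by
    have hx0 : x ≠ 0 := by rintro rfl; simp at hx
    simp [owalk, hx0]
  | t + 1, x, hx => by
    rw [mem_Icc] at hx
    have hright : x + 1 ∉ Icc (-(t : ℤ)) t := by rw [mem_Icc]; omega
    have hleft : x - 1 ∉ Icc (-(t : ℤ)) t := by rw [mem_Icc]; omega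
    rw [owalk, owalk_eq_zero_of_notMem_Icc hright, owalk_eq_zero_of_notMem_Icc hleft]
    simp

theorem Pmat_eq_antidiag (hs : Real.sin θ0 * Real.cos θ1 = 0) :
    Pmat θ0 θ1 = !![0, (Real.cos θ0 : ℂ); ((Real.sin θ0 * Real.sin θ1 : ℝ) : ℂ), 0] := by
  simp [Pmat, hs]

theorem Qmat_eq_antidiag (hs : Real.sin θ0 * Real.cos θ1 = 0) :
    Qmat θ0 θ1 = !![0, ((Real.sin θ0 * Real.sin θ1 : ℝ) : ℂ); (Real.cos θ0 : ℂ), 0] := by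
  simp [Qmat, hs]

theorem cos_sq_add_sin_mul_sin_sq (hs : Real.sin θ0 * Real.cos θ1 = 0) :
    Real.cos θ0 ^ 2 + (Real.sin θ0 * Real.sin θ1) ^ 2 = 1 := by
  linear_combination Real.sin_sq_add_cos_sq θ0 + Real.sin θ0 ^ 2 * Real.sin_sq_add_cos_sq θ1
    - Real.sin θ0 * Real.cos θ1 * hs

variable (θ0 θ1 p) in
noncomputable def chirality (i : Fin 2) (t : ℕ) (x : ℤ) : ℝ :=
  (owalk θ0 θ1 p t x i i).re

theorem findprob_eq_chirality_add (t : ℕ) (x : ℤ) :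
    findprob θ0 θ1 p t x = chirality θ0 θ1 p 0 t x + chirality θ0 θ1 p 1 t x := by
  rw [findprob, trace_fin_two, add_re, chirality, chirality]

theorem chirality_eq_zero_of_notMem_Icc {i : Fin 2} {t : ℕ} {x : ℤ}
    (hx : x ∉ Icc (-(t : ℤ)) t) : chirality θ0 θ1 p i t x = 0 := by
  simp [chirality, owalk_eq_zero_of_notMem_Icc hx]

theorem chirality_zero_succ (hs : Real.sin θ0 * Real.cos θ1 = 0) (t : ℕ) (x : ℤ) :
    chirality θ0 θ1 p 0 (t + 1) x
      = Real.cos θ0 ^ 2 * chirality θ0 θ1 p 1 t (x + 1)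
        + (Real.sin θ0 * Real.sin θ1) ^ 2 * chirality θ0 θ1 p 1 t (x - 1) := by
  rw [chirality, owalk, Matrix.add_apply, Pmat_eq_antidiag hs, Qmat_eq_antidiag hs,
    antidiag_mul_mul_conjTranspose_apply_zero_zero,
    antidiag_mul_mul_conjTranspose_apply_zero_zero, add_re, re_ofReal_mul, re_ofReal_mul]
  rfl

theorem chirality_one_succ (hs : Real.sin θ0 * Real.cos θ1 = 0) (t : ℕ) (x : ℤ) :
    chirality θ0 θ1 p 1 (t + 1) x
      = (Real.sin θ0 * Real.sin θ1) ^ 2 * chirality θ0 θ1 p 0 t (x + 1)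
        + Real.cos θ0 ^ 2 * chirality θ0 θ1 p 0 t (x - 1) := by
  rw [chirality, owalk, Matrix.add_apply, Pmat_eq_antidiag hs, Qmat_eq_antidiag hs,
    antidiag_mul_mul_conjTranspose_apply_one_one,
    antidiag_mul_mul_conjTranspose_apply_one_one, add_re, re_ofReal_mul, re_ofReal_mul]
  rfl

variable (θ0 θ1 p) in
noncomputable def chiralityMass (i : Fin 2) (t : ℕ) : ℝ :=
  ∑ x ∈ Icc (-(t : ℤ)) t, chirality θ0 θ1 p i t x

theorem chiralityMass_zero_succ (hs : Real.sin θ0 * Real.cos θ1 = 0) (t : ℕ) :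
    chiralityMass θ0 θ1 p 0 (t + 1) = chiralityMass θ0 θ1 p 1 t := by
  simp only [chiralityMass, chirality_zero_succ hs]
  rw [Nat.cast_succ, sum_Icc_succ_mul_shift (f := chirality θ0 θ1 p 1 t)
    (fun _ => chirality_eq_zero_of_notMem_Icc), cos_sq_add_sin_mul_sin_sq hs, one_mul]

theorem chiralityMass_one_succ (hs : Real.sin θ0 * Real.cos θ1 = 0) (t : ℕ) :
    chiralityMass θ0 θ1 p 1 (t + 1) = chiralityMass θ0 θ1 p 0 t := by
  simp only [chiralityMass, chirality_one_succ hs]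
  rw [Nat.cast_succ, sum_Icc_succ_mul_shift (f := chirality θ0 θ1 p 0 t)
    (fun _ => chirality_eq_zero_of_notMem_Icc), add_comm, cos_sq_add_sin_mul_sin_sq hs, one_mul]

theorem chiralityMass_sub (hs : Real.sin θ0 * Real.cos θ1 = 0) (t : ℕ) :
    chiralityMass θ0 θ1 p 0 t - chiralityMass θ0 θ1 p 1 t = (-1) ^ t * (2 * p - 1) := by
  induction t with
  | zero => simp [chiralityMass, chirality, owalk, two_mul, sub_sub_eq_add_sub]
  | succ t ih =>
    rw [chiralityMass_zero_succ hs, chiralityMass_one_succ hs, pow_succ]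
    linear_combination -ih

theorem moment1_succ (hs : Real.sin θ0 * Real.cos θ1 = 0) (t : ℕ) :
    moment1 θ0 θ1 p (t + 1) = moment1 θ0 θ1 p t
      + (2 * Real.cos θ0 ^ 2 - 1) * (chiralityMass θ0 θ1 p 0 t - chiralityMass θ0 θ1 p 1 t) := by
  set u := Real.cos θ0 ^ 2
  set v := (Real.sin θ0 * Real.sin θ1) ^ 2
  have huv : u + v = 1 := cos_sq_add_sin_mul_sin_sq hs
  set α := chirality θ0 θ1 p 0 t
  set δ := chirality θ0 θ1 p 1 t
  calc moment1 θ0 θ1 p (t + 1)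
      = ∑ x ∈ Icc (-((t : ℤ) + 1)) ((t : ℤ) + 1),
          ((((x + 1 : ℤ) : ℝ) - 1) * (u * δ (x + 1) + v * α (x + 1))
            + (((x - 1 : ℤ) : ℝ) + 1) * (v * δ (x - 1) + u * α (x - 1))) := by
        rw [moment1, Nat.cast_succ]
        refine sum_congr rfl fun x _ => ?_
        rw [findprob_eq_chirality_add, chirality_zero_succ hs, chirality_one_succ hs]
        push_cast
        ring
    _ = ∑ y ∈ Icc (-(t : ℤ)) t,
          (((y : ℝ) - 1) * (u * δ y + v * α y) + ((y : ℝ) + 1) * (v * δ y + u * α y)) :=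
        sum_Icc_succ_shift (G := fun y => ((y : ℝ) - 1) * (u * δ y + v * α y))
          (H := fun y => ((y : ℝ) + 1) * (v * δ y + u * α y))
          (fun y hy => by simp [α, δ, chirality_eq_zero_of_notMem_Icc hy])
          (fun y hy => by simp [α, δ, chirality_eq_zero_of_notMem_Icc hy])
    _ = _ := by
        rw [moment1, chiralityMass, chiralityMass, ← sum_sub_distrib, mul_sum,
          ← sum_add_distrib]
        refine sum_congr rfl fun y _ => ?_
        rw [findprob_eq_chirality_add]
        linear_combination ((y : ℝ) * (α y + δ y) - α y + δ y) * huv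

theorem moment1_eq (hs : Real.sin θ0 * Real.cos θ1 = 0) (t : ℕ) :
    moment1 θ0 θ1 p t = (2 * p - 1) * (2 * Real.cos θ0 ^ 2 - 1) * (1 - (-1) ^ t) / 2 := by
  induction t with
  | zero => simp [moment1]
  | succ t ih =>
    rw [moment1_succ hs, ih, chiralityMass_sub hs, pow_succ]
    ring

end OpenWalk

theorem owalk_moment1_parity_general (θ0 θ1 p : ℝ)
    (hs : Real.sin θ0 * Real.cos θ1 = 0) :
    ∀ t : ℕ,
      (Even t → moment1 θ0 θ1 p t = 0) ∧
      (Odd t → moment1 θ0 θ1 p t = (2 * p - 1) * (2 * Real.cos θ0 ^ 2 - 1)) := by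
  intro t
  rw [moment1_eq hs]
  exact ⟨fun ht => by rw [ht.neg_one_pow]; ring, fun ht => by rw [ht.neg_one_pow]; ring⟩

theorem owalk_moment1_parity (θ0 θ1 p : ℝ) (hp0 : 0 ≤ p) (hp1 : p ≤ 1)
    (hs : Real.sin θ0 * Real.cos θ1 = 0)
    (hne : Real.cos θ0 ≠ Real.sin θ0 * Real.sin θ1) :
    ∀ t : ℕ,
      (Even t → moment1 θ0 θ1 p t = 0) ∧
      (Odd t → moment1 θ0 θ1 p t = (2 * p - 1) * (2 * Real.cos θ0 ^ 2 - 1)) :=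
  owalk_moment1_parity_general θ0 θ1 p hs
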